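/- arXiv:2302.07477 — 2 statements merged into one kernel-verified Lean document; each statement's English description precedes it below -/
import Mathlib

section
/- Let (Ω, F, P) be a probability space with a filtration F_0 ⊆ F_1 ⊆ … ⊆ F_L, let q* ∈ ℝ^d be fixed, and let q̂_0, q̂_1, …, q̂_L be ℝ^d-valued random vectors with q̂_l measurable with respect to F_l. Let b > 0 and δ ∈ [0,1). Suppose P(‖q̂_0 − q*‖_∞ ≤ b) ≥ 1 − δ/(L+1), and that for each 1 ≤ l ≤ L, almost surely on the event {‖q̂_{l−1} − q*‖_∞ ≤ 2^{1−l} b} one has P( ‖q̂_l − q*‖_∞ ≤ 2^{−l} b | F_{l−1} ) ≥ 1 − δ/(L+1). Then P( ‖q̂_L − q*‖_∞ ≤ 2^{−L} b ) ≥ (1 − δ/(L+1))^{L+1} ≥ 1 − δ. -/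
/-!
Write `A l` for the event `‖q̂_l − q*‖_∞ ≤ 2^{-l} b` and `c = 1 − δ/(L+1)`. Since `A l` is
`F_l`-measurable, integrating the conditional bound over `A l` gives
`P(A (l+1)) ≥ P(A l ∩ A (l+1)) ≥ c · P(A l)`, so `P(A L) ≥ c^{L+1}` by induction.
Bernoulli's inequality gives `c^{L+1} ≥ 1 − δ`.
-/

open MeasureTheory

section ConditionalLowerBound

variable {Ω : Type*} {m mΩ : MeasurableSpace Ω} {μ : Measure Ω} [IsFiniteMeasure μ]

theorem mul_measureReal_le_measureReal_inter_of_condExp_indicator_ge (hm : m ≤ mΩ)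
    {S T : Set Ω} (hS : MeasurableSet[m] S) (hT : MeasurableSet T) {c : ℝ}
    (hc : ∀ᵐ ω ∂μ, ω ∈ S → c ≤ μ[T.indicator (fun _ => (1 : ℝ)) | m] ω) :
    μ.real S * c ≤ μ.real (S ∩ T) := by
  have hS' : MeasurableSet S := hm S hS
  calc μ.real S * c = ∫ ω in S, c ∂μ := by rw [setIntegral_const, smul_eq_mul]
    _ ≤ ∫ ω in S, μ[T.indicator (fun _ => (1 : ℝ)) | m] ω ∂μ :=
      setIntegral_mono_ae_restrict (integrableOn_const (measure_ne_top μ S))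
        integrable_condExp.integrableOn ((ae_restrict_iff' hS').mpr hc)
    _ = ∫ ω in S, T.indicator (fun _ => (1 : ℝ)) ω ∂μ :=
      setIntegral_condExp hm ((integrable_const 1).indicator hT) hS
    _ = μ.real (S ∩ T) := by
      rw [setIntegral_indicator hT, setIntegral_const, smul_eq_mul, mul_one]

theorem pow_succ_le_measureReal_of_condExp_indicator_ge (ℱ : ℕ → MeasurableSpace Ω)
    (A : ℕ → Set Ω) (L : ℕ) (hℱ : ∀ l ≤ L, ℱ l ≤ mΩ) (hA : ∀ l ≤ L, MeasurableSet[ℱ l] (A l))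
    {c : ℝ} (hc : 0 ≤ c) (h0 : c ≤ μ.real (A 0))
    (hstep : ∀ l < L, ∀ᵐ ω ∂μ, ω ∈ A l →
      c ≤ μ[(A (l + 1)).indicator (fun _ => (1 : ℝ)) | ℱ l] ω) :
    ∀ l ≤ L, c ^ (l + 1) ≤ μ.real (A l) := by
  intro l
  induction l with
  | zero => simpa using h0
  | succ l ih =>
    intro hl
    calc c ^ (l + 1 + 1) = c ^ (l + 1) * c := pow_succ c (l + 1)
      _ ≤ μ.real (A l) * c := mul_le_mul_of_nonneg_right (ih (by omega)) hc
      _ ≤ μ.real (A l ∩ A (l + 1)) :=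
        mul_measureReal_le_measureReal_inter_of_condExp_indicator_ge (hℱ l (by omega))
          (hA l (by omega)) (hℱ (l + 1) hl _ (hA (l + 1) hl)) (hstep l hl)
      _ ≤ μ.real (A (l + 1)) := measureReal_mono Set.inter_subset_right

end ConditionalLowerBound

theorem measurableSet_setOf_forall_abs_sub_le {Ω ι : Type*} [Countable ι]
    {m : MeasurableSpace Ω} {f : Ω → ι → ℝ} (hf : Measurable f) (q : ι → ℝ) (r : ℝ) :
    MeasurableSet {ω | ∀ i, |f ω i - q i| ≤ r} := by
  simp only [Set.ofPred_forall]
  exact MeasurableSet.iInter fun i =>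
    (((measurable_pi_apply i).comp hf).sub_const (q i)).abs measurableSet_Iic

theorem one_sub_le_one_sub_div_pow {n : ℕ} (hn : 0 < n) {δ : ℝ} (hδ : δ ≤ 2 * n) :
    1 - δ ≤ (1 - δ / n) ^ n := by
  have hn' : (0 : ℝ) < n := Nat.cast_pos.mpr hn
  have hbernoulli := one_add_mul_le_pow (a := -(δ / n))
    (by rw [neg_le_neg_iff, div_le_iff₀ hn']; linarith) n
  rwa [mul_neg, mul_div_cancel₀ δ hn'.ne', ← sub_eq_add_neg, ← sub_eq_add_neg] at hbernoulli

theorem error_halving_high_prob_general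
    {Ω ι : Type*} [Fintype ι]
    {mΩ : MeasurableSpace Ω} (μ : Measure Ω) [IsProbabilityMeasure μ]
    (L : ℕ) (ℱ : ℕ → MeasurableSpace Ω)
    (hℱ_le : ∀ l : ℕ, l ≤ L → ℱ l ≤ mΩ)
    (qstar : ι → ℝ) (qhat : ℕ → Ω → ι → ℝ)
    (hmeas : ∀ l : ℕ, l ≤ L → Measurable[ℱ l] (qhat l))
    (b δ : ℝ) (hδ1 : δ < 1)
    (h0 : ENNReal.ofReal (1 - δ / ((L : ℝ) + 1)) ≤
      μ {ω | ∀ i, |qhat 0 ω i - qstar i| ≤ b})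
    (hstep : ∀ l : ℕ, 1 ≤ l → l ≤ L →
      ∀ᵐ ω ∂μ, (∀ i, |qhat (l - 1) ω i - qstar i| ≤ b / 2 ^ (l - 1)) →
        1 - δ / ((L : ℝ) + 1) ≤
          (μ[Set.indicator {ω' | ∀ i, |qhat l ω' i - qstar i| ≤ b / 2 ^ l}
              (fun _ => (1 : ℝ)) | ℱ (l - 1)]) ω) :
    ENNReal.ofReal ((1 - δ / ((L : ℝ) + 1)) ^ (L + 1)) ≤
        μ {ω | ∀ i, |qhat L ω i - qstar i| ≤ b / 2 ^ L} ∧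
      1 - δ ≤ (1 - δ / ((L : ℝ) + 1)) ^ (L + 1) := by
  set A : ℕ → Set Ω := fun l => {ω | ∀ i, |qhat l ω i - qstar i| ≤ b / 2 ^ l}
  have hL : (0 : ℝ) < (L : ℝ) + 1 := by positivity
  have hc : 0 ≤ 1 - δ / ((L : ℝ) + 1) := by
    rw [sub_nonneg, div_le_one hL]; linarith [(L.cast_nonneg : (0 : ℝ) ≤ L)]
  have hA0 : 1 - δ / ((L : ℝ) + 1) ≤ μ.real (A 0) := by
    rw [measureReal_def, ← ENNReal.ofReal_le_iff_le_toReal (measure_ne_top μ _)]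
    simpa only [A, pow_zero, div_one] using h0
  have hstep' : ∀ l < L, ∀ᵐ ω ∂μ, ω ∈ A l →
      1 - δ / ((L : ℝ) + 1) ≤ μ[(A (l + 1)).indicator (fun _ => (1 : ℝ)) | ℱ l] ω := by
    intro l hl
    simpa only [A, Set.mem_ofPred_eq, Nat.add_sub_cancel] using hstep (l + 1) (by omega) hl
  have hchain := pow_succ_le_measureReal_of_condExp_indicator_ge ℱ A L hℱ_le
    (fun l hl => measurableSet_setOf_forall_abs_sub_le (hmeas l hl) qstar _) hc hA0 hstep' L le_rfl
  refine ⟨(ENNReal.ofReal_le_iff_le_toReal (measure_ne_top μ _)).mpr hchain, ?_⟩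
  have hδ : δ ≤ 2 * ((L + 1 : ℕ) : ℝ) := by push_cast; linarith [(L.cast_nonneg : (0 : ℝ) ≤ L)]
  simpa using one_sub_le_one_sub_div_pow L.succ_pos hδ

/-- high-probability error-halving across the outer loop.  If
`‖q̂₀ − q*‖_∞ ≤ b` with probability at least `1 − δ/(L+1)`, and for each `1 ≤ l ≤ L`,
almost surely on `{‖q̂_{l−1} − q*‖_∞ ≤ 2^{1−l} b}` the conditional probability (given
`F_{l−1}`) of `{‖q̂_l − q*‖_∞ ≤ 2^{−l} b}` is at least `1 − δ/(L+1)`, then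
`P(‖q̂_L − q*‖_∞ ≤ 2^{−L} b) ≥ (1 − δ/(L+1))^{L+1} ≥ 1 − δ`. -/
theorem error_halving_high_prob
    {Ω ι : Type*} [Fintype ι] [Nonempty ι]
    {mΩ : MeasurableSpace Ω} (μ : Measure Ω) [IsProbabilityMeasure μ]
    (L : ℕ) (ℱ : ℕ → MeasurableSpace Ω)
    (hℱ_mono : ∀ k l : ℕ, k ≤ l → l ≤ L → ℱ k ≤ ℱ l)
    (hℱ_le : ∀ l : ℕ, l ≤ L → ℱ l ≤ mΩ)
    (qstar : ι → ℝ) (qhat : ℕ → Ω → ι → ℝ)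
    (hmeas : ∀ l : ℕ, l ≤ L → Measurable[ℱ l] (qhat l))
    (b δ : ℝ) (hb : 0 < b) (hδ0 : 0 ≤ δ) (hδ1 : δ < 1)
    (h0 : ENNReal.ofReal (1 - δ / ((L : ℝ) + 1)) ≤
      μ {ω | ∀ i, |qhat 0 ω i - qstar i| ≤ b})
    (hstep : ∀ l : ℕ, 1 ≤ l → l ≤ L →
      ∀ᵐ ω ∂μ, (∀ i, |qhat (l - 1) ω i - qstar i| ≤ b / 2 ^ (l - 1)) →
        1 - δ / ((L : ℝ) + 1) ≤
          (μ[Set.indicator {ω' | ∀ i, |qhat l ω' i - qstar i| ≤ b / 2 ^ l}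
              (fun _ => (1 : ℝ)) | ℱ (l - 1)]) ω) :
    ENNReal.ofReal ((1 - δ / ((L : ℝ) + 1)) ^ (L + 1)) ≤
        μ {ω | ∀ i, |qhat L ω i - qstar i| ≤ b / 2 ^ L} ∧
      1 - δ ≤ (1 - δ / ((L : ℝ) + 1)) ^ (L + 1) :=
  error_halving_high_prob_general μ L ℱ hℱ_le qstar qhat hmeas b δ hδ1 h0 hstep
end

section
/- Let γ ∈ [0.9, 1) and let t satisfy 10 ≤ t ≤ 1/(1−γ), and set p = 1/t. Consider the hard MDP instance M_{γ,t} with S = {1,2}, A = {a₁,a₂}, P_{s,a₁} = P_{s,a₂} given by the transition matrix [[1−p, p],[p, 1−p]], reward r(1,·) = 1 and r(2,·) = 0, and discount γ. Then every policy of M_{γ,t} is optimal, every policy induces a kernel satisfying the (1,p)-Doeblin condition, and for any optimal policy π, ν^π(M_{γ,t})(1,a₁)² ≥ t / (3⁵ (1−γ)²). -/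
/-!
Rewards and transitions of `M_{γ,t}` do not depend on the action, hence neither does `q*`: every
policy is optimal, and `σ(q*)²` is the same at every state-action pair, namely `γ² p (1-p) Δ²`
with `Δ = q*(1,·) - q*(2,·) = 1 / (1 - γ + 2γp) ≥ t/3` (using `1 - γ ≤ p`). Since `P^π` is
stochastic, `I - γP^π` is strictly diagonally dominant, hence invertible, and every row of its
inverse sums to `1/(1-γ)`; by Cauchy–Schwarz over the four state-action pairs the squared row
sums to at least `1/(4(1-γ)²)`.
-/

open Finset Matrix

section StochasticResolvent

variable {n : Type*} [Fintype n] [DecidableEq n] {K : Matrix n n ℝ} {γ : ℝ}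

theorem Matrix.det_one_sub_smul_ne_zero_of_stochastic (hK0 : ∀ i j, 0 ≤ K i j)
    (hK1 : ∀ i, ∑ j, K i j = 1) (hγ0 : 0 ≤ γ) (hγ1 : γ < 1) : (1 - γ • K).det ≠ 0 := by
  refine det_ne_zero_of_sum_row_lt_diag fun k => ?_
  have hkk : K k k ≤ 1 := hK1 k ▸ single_le_sum (fun j _ => hK0 k j) (mem_univ k)
  have hoff : ∑ j ∈ univ.erase k, ‖(1 - γ • K) k j‖ = γ * (1 - K k k) := by
    rw [← hK1 k, ← add_sum_erase _ _ (mem_univ k), add_sub_cancel_left, mul_sum]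
    refine sum_congr rfl fun j hj => ?_
    simp [one_apply_ne' (ne_of_mem_erase hj), abs_of_nonneg hγ0, abs_of_nonneg (hK0 k j)]
  have hdiag : ‖(1 - γ • K) k k‖ = 1 - γ * K k k := by
    simp only [sub_apply, one_apply_eq, smul_apply, smul_eq_mul, Real.norm_eq_abs]
    exact abs_of_nonneg (by nlinarith [hK0 k k])
  rw [hoff, hdiag]
  nlinarith [hK0 k k]

theorem Matrix.sum_inv_one_sub_smul_row_of_stochastic (hK0 : ∀ i j, 0 ≤ K i j)
    (hK1 : ∀ i, ∑ j, K i j = 1) (hγ0 : 0 ≤ γ) (hγ1 : γ < 1) (i : n) :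
    ∑ j, (1 - γ • K)⁻¹ i j = (1 - γ)⁻¹ := by
  have hdet := (det_one_sub_smul_ne_zero_of_stochastic hK0 hK1 hγ0 hγ1).isUnit
  have hfix : (1 - γ • K) *ᵥ 1 = (1 - γ) • 1 := by
    ext i
    simp [mulVec, dotProduct, one_apply, ← mul_sum, hK1]
  have hres : (1 - γ • K)⁻¹ *ᵥ 1 = (1 - γ)⁻¹ • 1 := by
    rw [eq_inv_smul_iff₀ (sub_ne_zero.mpr hγ1.ne'), ← mulVec_smul, ← hfix, mulVec_mulVec,
      nonsing_inv_mul _ hdet, one_mulVec]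
  simpa [mulVec, dotProduct] using congr_fun hres i

theorem Matrix.inv_one_sub_smul_row_sum_sq_ge_of_stochastic (hK0 : ∀ i j, 0 ≤ K i j)
    (hK1 : ∀ i, ∑ j, K i j = 1) (hγ0 : 0 ≤ γ) (hγ1 : γ < 1) (i : n) :
    ((1 - γ)⁻¹) ^ 2 / Fintype.card n ≤ ∑ j, (1 - γ • K)⁻¹ i j ^ 2 := by
  have hcard : (0 : ℝ) < Fintype.card n := Nat.cast_pos.mpr (Fintype.card_pos_iff.mpr ⟨i⟩)
  rw [div_le_iff₀' hcard, ← sum_inv_one_sub_smul_row_of_stochastic hK0 hK1 hγ0 hγ1 i]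
  exact sq_sum_le_card_mul_sum_sq

end StochasticResolvent

section PolicyKernel

variable {S A : Type*} [DecidableEq A] {P : S → A → S → ℝ}

def policyKernel (P : S → A → S → ℝ) (π : S → A) : Matrix (S × A) (S × A) ℝ :=
  Matrix.of fun x z => if z.2 = π z.1 then P x.1 x.2 z.1 else 0

theorem policyKernel_nonneg (hP : ∀ s a s', 0 ≤ P s a s') (π : S → A) (x z : S × A) :
    0 ≤ policyKernel P π x z := by
  simp only [policyKernel, of_apply]
  split_ifs
  exacts [hP _ _ _, le_rfl]

theorem sum_policyKernel_row [Fintype S] [Fintype A] (π : S → A) (x : S × A) :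
    ∑ z, policyKernel P π x z = ∑ s', P x.1 x.2 s' := by
  simp [policyKernel, Fintype.sum_prod_type]

end PolicyKernel

section ActionIndependent

variable {S A : Type*} {P : S → A → S → ℝ} {r : S → A → ℝ} {γ : ℝ} {q : S → A → ℝ}

theorem bellman_eq_of_action_indep [Fintype S] (hP : ∀ s a b, P s a = P s b)
    (hr : ∀ s a b, r s a = r s b)
    (hq : ∀ s a, q s a = r s a + γ * ∑ s', P s a s' * ⨆ b, q s' b) (s : S) (a b : A) :
    q s a = q s b := by
  rw [hq s a, hq s b, hr s a b, hP s a b]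

theorem iSup_eq_of_action_indep [Nonempty A] (h : ∀ s a b, q s a = q s b) (s : S) (a : A) :
    ⨆ b, q s b = q s a := by
  simp only [h s _ a, ciSup_const]

theorem policy_bellman_of_action_indep [Fintype S] [Nonempty A] (hP : ∀ s a b, P s a = P s b)
    (hr : ∀ s a b, r s a = r s b) (hq : ∀ s a, q s a = r s a + γ * ∑ s', P s a s' * ⨆ b, q s' b)
    (π : S → A) (s : S) (a : A) : q s a = r s a + γ * ∑ s', P s a s' * q s' (π s') := by
  have hsup := iSup_eq_of_action_indep (bellman_eq_of_action_indep hP hr hq)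
  rw [hq s a]
  simp only [fun s' => hsup s' (π s')]

end ActionIndependent

theorem Fin.sum_two_mul_sq_sub_sq_sum (μ f : Fin 2 → ℝ) (hμ : μ 0 + μ 1 = 1) :
    ∑ i, μ i * f i ^ 2 - (∑ i, μ i * f i) ^ 2 = μ 0 * μ 1 * (f 0 - f 1) ^ 2 := by
  rw [Fin.sum_univ_two, Fin.sum_univ_two]
  linear_combination (-(μ 0 * f 0 ^ 2 + μ 1 * f 1 ^ 2)) * hμ

def IsHardKernel (p : ℝ) (P : Fin 2 → Fin 2 → Fin 2 → ℝ) : Prop :=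
  ∀ s a s', P s a s' = if s = s' then 1 - p else p

section HardKernel

variable {p : ℝ} {P : Fin 2 → Fin 2 → Fin 2 → ℝ}

theorem hardKernel_nonneg (hP : IsHardKernel p P) (hp0 : 0 ≤ p) (hp1 : p ≤ 1) (s a s' : Fin 2) :
    0 ≤ P s a s' := by
  rw [hP]
  split_ifs <;> linarith

theorem hardKernel_sum (hP : IsHardKernel p P) (s a : Fin 2) : ∑ s', P s a s' = 1 := by
  rw [Fin.sum_univ_two, hP, hP]
  fin_cases s <;> simp

theorem hardKernel_doeblin (hP : IsHardKernel p P) (hp0 : 0 ≤ p) (hp1 : p ≤ 1 / 2)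
    (π : Fin 2 → Fin 2) :
    ∃ ψ : Fin 2 → ℝ, (∀ s', 0 ≤ ψ s') ∧ (∑ s', ψ s' = 1) ∧
      ∀ s s', p * ψ s' ≤ ((Matrix.of fun u u' => P u (π u) u') ^ 1) s s' := by
  refine ⟨fun _ => 1 / 2, fun _ => by norm_num, by norm_num, fun s s' => ?_⟩
  rw [pow_one, of_apply, hP]
  split_ifs <;> linarith

theorem hardKernel_variance (hP : IsHardKernel p P) (γ : ℝ) (v : Fin 2 → ℝ) (s a : Fin 2) :
    γ ^ 2 * (∑ s', P s a s' * v s' ^ 2 - (∑ s', P s a s' * v s') ^ 2) =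
      γ ^ 2 * (p * (1 - p)) * (v 0 - v 1) ^ 2 := by
  have hμμ : P s a 0 * P s a 1 = p * (1 - p) := by
    rw [hP, hP]
    fin_cases s <;> simp [mul_comm]
  have hμ : P s a 0 + P s a 1 = 1 := by rw [← hardKernel_sum hP s a, Fin.sum_univ_two]
  rw [Fin.sum_two_mul_sq_sub_sq_sum _ _ hμ, hμμ]
  ring

theorem hardMDP_value_gap (hP : IsHardKernel p P) {γ : ℝ} {v : Fin 2 → ℝ}
    (hv : ∀ s, v s = (if s = 0 then 1 else 0) + γ * ∑ s', P s 0 s' * v s') :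
    (v 0 - v 1) * (1 - γ + 2 * γ * p) = 1 := by
  have h0 := hv 0
  have h1 := hv 1
  rw [Fin.sum_univ_two, hP, hP] at h0 h1
  simp only [if_true, one_ne_zero, if_false, zero_ne_one] at h0 h1
  linear_combination h0 - h1

end HardKernel

theorem inv_three_mul_le_of_mul_eq_one {g γ p : ℝ} (hg : g * (1 - γ + 2 * γ * p) = 1)
    (hγ0 : 0 ≤ γ) (hγ1 : γ ≤ 1) (hγp : 1 - γ ≤ p) : (3 * p)⁻¹ ≤ g := by
  have hd : 0 < 1 - γ + 2 * γ * p := by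
    refine lt_of_le_of_ne (by nlinarith) fun h => ?_
    simp [← h] at hg
  rw [eq_inv_of_mul_eq_one_left hg]
  exact inv_anti₀ hd (by nlinarith)

theorem hardMDP_nu_sq_bound_of_gap {γ t g : ℝ} (hγ0 : 0.9 ≤ γ) (hγ1 : γ < 1) (ht : 10 ≤ t)
    (hg : t / 3 ≤ g) :
    t / (3 ^ 5 * (1 - γ) ^ 2) ≤
      ((1 - γ)⁻¹) ^ 2 / 4 * (γ ^ 2 * (1 / t * (1 - 1 / t)) * g ^ 2) := by
  have ht0 : 0 < t := by linarith
  have hg2 : t ^ 2 / 9 ≤ g ^ 2 := by nlinarith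
  have hγ2 : 81 / 100 ≤ γ ^ 2 := by nlinarith
  have hp : 9 / 10 ≤ 1 - 1 / t := by
    rw [le_sub_comm, div_le_iff₀ ht0]; linarith
  have key : t / 3 ^ 5 ≤ γ ^ 2 * (1 - 1 / t) * (g ^ 2 / t) / 4 := by
    have : t / 9 ≤ g ^ 2 / t := by rw [le_div_iff₀ ht0]; linarith
    have : 81 / 100 * (9 / 10) * (t / 9) ≤ γ ^ 2 * (1 - 1 / t) * (g ^ 2 / t) := by
      gcongr
    linarith
  calc t / (3 ^ 5 * (1 - γ) ^ 2) = ((1 - γ)⁻¹) ^ 2 * (t / 3 ^ 5) := by field_simp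
    _ ≤ ((1 - γ)⁻¹) ^ 2 * (γ ^ 2 * (1 - 1 / t) * (g ^ 2 / t) / 4) := by gcongr
    _ = _ := by ring

/-- for the hard two-state MDP instance `M_{γ,t}` with `p = 1/t`,
`γ ∈ [0.9,1)` and `10 ≤ t ≤ 1/(1−γ)` (states/actions encoded by `Fin 2`, with state `1 ↦ 0`
and action `a₁ ↦ 0`): every policy is optimal, every policy induces a `(1,p)`-Doeblin
kernel, and every optimal policy `π` satisfies `ν^π(M_{γ,t})(1,a₁)² ≥ t/(3⁵(1−γ)²)`. -/
theorem hard_mdp_nu_sq_lower_bound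
    (γ t : ℝ) (hγ0 : 0.9 ≤ γ) (hγ1 : γ < 1) (ht0 : 10 ≤ t) (ht1 : t ≤ 1 / (1 - γ))
    -- the hard MDP instance M_{γ,t}, with p = 1/t
    (P : Fin 2 → Fin 2 → Fin 2 → ℝ)
    (hP : ∀ s a s', P s a s' = if s = s' then 1 - 1 / t else 1 / t)
    (r : Fin 2 → Fin 2 → ℝ)
    (hr : ∀ s a, r s a = if s = 0 then 1 else 0)
    -- its optimal q-function (characterized by the Bellman optimality equation)
    (qstar : Fin 2 → Fin 2 → ℝ)
    (hqstar : ∀ s a, qstar s a = r s a + γ * ∑ s', P s a s' * (⨆ b, qstar s' b)) :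
    -- every policy is optimal (its q-function equals q*)
    (∀ π : Fin 2 → Fin 2, ∀ s a,
      qstar s a = r s a + γ * ∑ s', P s a s' * qstar s' (π s')) ∧
    -- every policy induces a (1, 1/t)-Doeblin kernel
    (∀ π : Fin 2 → Fin 2, ∃ ψ : Fin 2 → ℝ, (∀ s', 0 ≤ ψ s') ∧ (∑ s', ψ s' = 1) ∧
      ∀ s s', (1 / t) * ψ s' ≤ ((Matrix.of fun u u' => P u (π u) u') ^ 1) s s') ∧
    -- and any optimal policy π satisfies the lower bound on ν^π(M_{γ,t})(1,a₁)²
    (∀ π : Fin 2 → Fin 2,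
      (∀ s a, qstar s a = r s a + γ * ∑ s', P s a s' * qstar s' (π s')) →
      t / (3 ^ 5 * (1 - γ) ^ 2) ≤
        ∑ y : Fin 2 × Fin 2,
          (((1 - γ • (Matrix.of fun x z : Fin 2 × Fin 2 =>
                if z.2 = π z.1 then P x.1 x.2 z.1 else 0))⁻¹ (0, 0) y) ^ 2) *
            (γ ^ 2 * (∑ s', P y.1 y.2 s' * (⨆ b, qstar s' b) ^ 2 -
              (∑ s', P y.1 y.2 s' * (⨆ b, qstar s' b)) ^ 2))) := by
  set p := 1 / t
  have hp : p ≤ 1 / 10 := one_div_le_one_div_of_le (by norm_num) ht0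
  have hγp : 1 - γ ≤ p := by
    rw [le_one_div (by linarith) (by linarith)] at ht1
    linarith
  have hPa : ∀ s a b, P s a = P s b := fun s a b => funext fun s' => by rw [hP, hP]
  have hra : ∀ s a b, r s a = r s b := fun s a b => by rw [hr, hr]
  have hsup := iSup_eq_of_action_indep (bellman_eq_of_action_indep hPa hra hqstar)
  refine ⟨policy_bellman_of_action_indep hPa hra hqstar,
    hardKernel_doeblin hP (by positivity) (by linarith), fun π _ => ?_⟩
  set g := qstar 0 0 - qstar 1 0
  have hgap : t / 3 ≤ g := by
    have hv := hardMDP_value_gap hP (v := (qstar · 0)) fun s => by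
      simpa only [hr, hsup _ 0] using hqstar s 0
    calc t / 3 = (3 * p)⁻¹ := by simp only [p, mul_one_div, inv_div]
      _ ≤ g := inv_three_mul_le_of_mul_eq_one hv (by linarith) hγ1.le hγp
  have hσ_nonneg : 0 ≤ γ ^ 2 * (p * (1 - p)) * g ^ 2 := by
    have : 0 ≤ p * (1 - p) := mul_nonneg (by positivity) (by linarith)
    positivity
  simp only [hsup _ 0, hardKernel_variance hP, ← sum_mul]
  calc t / (3 ^ 5 * (1 - γ) ^ 2)
      ≤ ((1 - γ)⁻¹) ^ 2 / 4 * (γ ^ 2 * (p * (1 - p)) * g ^ 2) :=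
        hardMDP_nu_sq_bound_of_gap hγ0 hγ1 ht0 hgap
    _ ≤ _ := by
        gcongr
        exact inv_one_sub_smul_row_sum_sq_ge_of_stochastic (K := policyKernel P π)
          (policyKernel_nonneg (hardKernel_nonneg hP (by positivity) (by linarith)) π)
          (fun x => (sum_policyKernel_row π x).trans (hardKernel_sum hP _ _))
          (by linarith) hγ1 _
end
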